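/- arXiv:2407.00251 — 3 statements merged into one kernel-verified Lean document; each statement's English description precedes it below -/
import Mathlib

section
/- For any feasible instance of Graph Inspection (an undirected graph G with nonnegative edge weights, a coloring function assigning each vertex a set of colors, a start vertex s, and a target number t of colors), there exists an optimal solution walk (a minimum-weight closed walk from s collecting at least t colors) that does not repeat any directed edge; i.e., no ordered pair (u,v) appears twice as consecutive vertices in the walk. -/
/-- Weight of a walk given as a list of vertices: sum of weights of consecutive pairs. -/
def walkWeight {V : Type*} (w : V → V → ℝ) : List V → ℝ
  | [] => 0
  | [_] => 0
  | a :: b :: rest => w a b + walkWeight w (b :: rest)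

/-- The set of colors collected by a walk. -/
def collected {V C : Type*} [DecidableEq C] (col : V → Finset C) (p : List V) : Finset C :=
  p.foldr (fun v acc => col v ∪ acc) ∅

/-- A closed walk starting and ending at `s`, with consecutive vertices adjacent. -/
def IsClosedWalkFrom {V : Type*} (Adj : V → V → Prop) (s : V) (p : List V) : Prop :=
  p ≠ [] ∧ p.head? = some s ∧ p.getLast? = some s ∧ p.Chain' Adj

/-- A solution to Graph Inspection: a closed walk from `s` collecting at least `t` colors. -/
def IsSolution {V C : Type*} [DecidableEq C] (Adj : V → V → Prop)
    (col : V → Finset C) (s : V) (t : ℕ) (p : List V) : Prop :=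
  IsClosedWalkFrom Adj s p ∧ t ≤ (collected col p).card

/-!
A walk that traverses the directed edge `(u, v)` twice has the form `X u S v Y`, where `S` is the
stretch from the first arrival at `v` to the second departure from `u`, so `S` runs from `v` to `u`.
Replacing it by `X S⁻¹ Y` keeps the walk closed at `s` and visits the same vertices, while the
weight drops by `2 w(u, v) ≥ 0` and the length by two. Iterating, every solution is dominated by
one repeating no directed edge; such walks have length at most `|V|² + 1`, so there are finitely
many of them, and one of minimum weight is optimal among all solutions.
-/

section Walks

open List

variable {V : Type*}

theorem walkWeight_append_cons (w : V → V → ℝ) (a : V) (l₂ : List V) :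
    ∀ l₁ : List V,
      walkWeight w (l₁ ++ a :: l₂) = walkWeight w (l₁ ++ [a]) + walkWeight w (a :: l₂)
  | [] => by simp [walkWeight]
  | [x] => by cases l₂ <;> simp [walkWeight]
  | x :: y :: l₁ => by
    simp only [cons_append, walkWeight] at *
    rw [← cons_append, walkWeight_append_cons w a l₂ (y :: l₁), cons_append]
    ring

theorem walkWeight_append_of_head? {w : V → V → ℝ} {l₂ : List V} {a : V}
    (h : l₂.head? = some a) (l₁ : List V) :
    walkWeight w (l₁ ++ l₂) = walkWeight w (l₁ ++ [a]) + walkWeight w l₂ := by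
  obtain ⟨l₂, rfl⟩ := head?_eq_some_iff.mp h
  exact walkWeight_append_cons w a l₂ l₁

theorem walkWeight_append_of_getLast? {w : V → V → ℝ} {l₁ : List V} {a : V}
    (h : l₁.getLast? = some a) (l₂ : List V) :
    walkWeight w (l₁ ++ l₂) = walkWeight w l₁ + walkWeight w (a :: l₂) := by
  obtain ⟨l₁, rfl⟩ := getLast?_eq_some_iff.mp h
  rw [append_assoc, singleton_append, walkWeight_append_cons]

theorem walkWeight_reverse {w : V → V → ℝ} (hw : ∀ u v, w u v = w v u) :
    ∀ l : List V, walkWeight w l.reverse = walkWeight w l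
  | [] => rfl
  | [_] => rfl
  | a :: b :: l => by
    rw [reverse_cons, walkWeight_append_of_getLast? (a := b) (by simp),
      walkWeight_reverse hw (b :: l), add_comm]
    simp [walkWeight, hw a b]

theorem walkWeight_shortcut {w : V → V → ℝ} (hw : ∀ u v, w u v = w v u)
    {S : List V} {u v : V} (hv : S.head? = some v) (hu : S.getLast? = some u) (X Y : List V) :
    walkWeight w (X ++ u :: (S ++ v :: Y)) = walkWeight w (X ++ S.reverse ++ Y) + 2 * w u v := by
  have hlhs : walkWeight w (u :: (S ++ v :: Y)) =
      w u v + walkWeight w S + walkWeight w (u :: v :: Y) := by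
    rw [← cons_append, walkWeight_append_of_getLast? (a := u) (by simp [getLast?_cons, hu])]
    obtain ⟨S, rfl⟩ := head?_eq_some_iff.mp hv
    rfl
  have hrhs : walkWeight w (X ++ S.reverse ++ Y) =
      walkWeight w (X ++ [u]) + walkWeight w S + walkWeight w (v :: Y) := by
    rw [walkWeight_append_of_getLast? (a := v) (by simp [hv]),
      walkWeight_append_of_head? (by rwa [head?_reverse]), walkWeight_reverse hw]
  rw [walkWeight_append_cons, hlhs, hrhs]
  simp only [walkWeight]
  ring

theorem isChain_shortcut {R : V → V → Prop} (hR : Symmetric R) {S : List V} {u v : V}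
    (hv : S.head? = some v) (hu : S.getLast? = some u) {X Y : List V}
    (h : IsChain R (X ++ u :: (S ++ v :: Y))) : IsChain R (X ++ S.reverse ++ Y) := by
  obtain ⟨hX, huSvY, hXu⟩ := isChain_append.mp h
  obtain ⟨hS, hvY, -⟩ := isChain_append.mp huSvY.tail
  have hSrev : IsChain R S.reverse := isChain_reverse.mpr (hS.imp fun _ _ h ↦ hR h)
  rw [append_assoc]
  refine hX.append (hSrev.append hvY.tail ?_) ?_
  · simpa [getLast?_reverse, hv] using hvY.rel_head?
  · simpa [head?_append, head?_reverse, hu] using hXu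

theorem head?_shortcut {S : List V} {u : V} (hu : S.getLast? = some u) (v : V) (X Y : List V) :
    (X ++ S.reverse ++ Y).head? = (X ++ u :: (S ++ v :: Y)).head? := by
  simp [head?_append, head?_reverse, hu]

theorem getLast?_shortcut {S : List V} {v : V} (hv : S.head? = some v) (u : V) (X Y : List V) :
    (X ++ S.reverse ++ Y).getLast? = (X ++ u :: (S ++ v :: Y)).getLast? := by
  rw [← cons_append, ← append_assoc, getLast?_append_cons]
  simp [getLast?_append, getLast?_reverse, getLast?_cons, hv]

theorem subset_shortcut {S : List V} {u v : V} (hv : S.head? = some v) (hu : S.getLast? = some u)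
    (X Y : List V) : X ++ u :: (S ++ v :: Y) ⊆ X ++ S.reverse ++ Y := by
  have := mem_of_head? hv
  have := mem_of_getLast? hu
  intro x hx
  simp only [mem_append, mem_cons, mem_reverse] at hx ⊢
  rcases hx with hx | rfl | hx | rfl | hx <;> simp_all

end Walks

namespace List

variable {V : Type*}

theorem exists_eq_append_of_mem_zip_tail {u v : V} :
    ∀ {l : List V}, (u, v) ∈ l.zip l.tail → ∃ X Y, l = X ++ u :: v :: Y
  | [], h | [_], h => by simp at h
  | a :: b :: l, h => by
    rcases mem_cons.mp h with h | h
    · obtain ⟨rfl, rfl⟩ := Prod.mk.inj h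
      exact ⟨[], l, rfl⟩
    · obtain ⟨X, Y, hl⟩ := exists_eq_append_of_mem_zip_tail h
      exact ⟨a :: X, Y, by rw [hl, cons_append]⟩

theorem exists_eq_append_of_not_nodup_zip_tail :
    ∀ {p : List V}, ¬ (p.zip p.tail).Nodup →
      ∃ X S Y u v, p = X ++ u :: (S ++ v :: Y) ∧ S.head? = some v ∧ S.getLast? = some u
  | [], h | [_], h => by simp at h
  | a :: b :: l, h => by
    rw [tail_cons, zip_cons_cons, nodup_cons, not_and_or, not_not] at h
    rcases h with h | h
    · obtain ⟨X, Y, hl⟩ := exists_eq_append_of_mem_zip_tail h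
      refine ⟨[], X ++ [a], Y, a, b, by simp [hl], ?_, by simp⟩
      rcases X with _ | ⟨x, X⟩ <;> simp_all
    · obtain ⟨X, S, Y, u, v, hl, hv, hu⟩ := exists_eq_append_of_not_nodup_zip_tail h
      exact ⟨a :: X, S, Y, u, v, by rw [hl, cons_append], hv, hu⟩

theorem finite_setOf_nodup_zip_tail (V : Type*) [Finite V] :
    {p : List V | (p.zip p.tail).Nodup}.Finite := by
  have := Fintype.ofFinite V
  refine (finite_length_le V (Fintype.card (V × V) + 1)).subset fun p hp ↦ ?_
  have := hp.length_le_card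
  simp only [length_zip, length_tail] at this
  change p.length ≤ _
  omega

end List

section GraphInspection

variable {V C : Type*} [DecidableEq C]

theorem mem_collected {col : V → Finset C} {c : C} {p : List V} :
    c ∈ collected col p ↔ ∃ v ∈ p, c ∈ col v := by
  induction p with
  | nil => simp [collected]
  | cons a p ih => simp [collected, ← ih]

theorem collected_mono (col : V → Finset C) {p q : List V} (h : p ⊆ q) :
    collected col p ⊆ collected col q := fun _ hc ↦
  let ⟨v, hv, hc⟩ := mem_collected.mp hc
  mem_collected.mpr ⟨v, h hv, hc⟩

variable {Adj : V → V → Prop} {col : V → Finset C} {s : V} {t : ℕ}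

theorem IsSolution.shortcut (hAdj : Symmetric Adj) {X S Y : List V} {u v : V}
    (h : IsSolution Adj col s t (X ++ u :: (S ++ v :: Y))) (hv : S.head? = some v)
    (hu : S.getLast? = some u) : IsSolution Adj col s t (X ++ S.reverse ++ Y) := by
  obtain ⟨⟨-, hhead, hlast, hchain⟩, hcard⟩ := h
  refine ⟨⟨?_, ?_, ?_, isChain_shortcut hAdj hv hu hchain⟩, ?_⟩
  · exact List.ne_nil_of_mem (subset_shortcut hv hu X Y (a := u) (by simp))
  · rwa [head?_shortcut hu]
  · rwa [getLast?_shortcut hv]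
  · exact hcard.trans (Finset.card_le_card (collected_mono col (subset_shortcut hv hu X Y)))

theorem IsSolution.exists_nodup_zip_tail_le (hAdj : Symmetric Adj) {w : V → V → ℝ}
    (hw : ∀ u v, 0 ≤ w u v) (hwsymm : ∀ u v, w u v = w v u) {p : List V}
    (hp : IsSolution Adj col s t p) :
    ∃ q, IsSolution Adj col s t q ∧ walkWeight w q ≤ walkWeight w p ∧
      (q.zip q.tail).Nodup := by
  by_cases hnd : (p.zip p.tail).Nodup
  · exact ⟨p, hp, le_rfl, hnd⟩
  obtain ⟨X, S, Y, u, v, hpXSY, hv, hu⟩ := List.exists_eq_append_of_not_nodup_zip_tail hnd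
  rw [hpXSY] at hp ⊢
  obtain ⟨q, hq, hqw, hqnd⟩ :=
    (hp.shortcut hAdj hv hu).exists_nodup_zip_tail_le hAdj hw hwsymm
  refine ⟨q, hq, ?_, hqnd⟩
  rw [walkWeight_shortcut hwsymm hv hu]
  linarith [hw u v]
termination_by p.length
decreasing_by simp [hpXSY]

end GraphInspection

/-- any feasible Graph Inspection instance admits an optimal solution walk
repeating no directed edge. -/
theorem stmt0 {V C : Type*} [Fintype V] [DecidableEq C]
    (Adj : V → V → Prop) (hsymm : Symmetric Adj)
    (w : V → V → ℝ) (hw : ∀ u v, 0 ≤ w u v) (hwsymm : ∀ u v, w u v = w v u)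
    (col : V → Finset C) (s : V) (t : ℕ)
    (hfeas : ∃ p, IsSolution Adj col s t p) :
    ∃ p, IsSolution Adj col s t p ∧
      (∀ q, IsSolution Adj col s t q → walkWeight w p ≤ walkWeight w q) ∧
      (p.zip p.tail).Nodup := by
  obtain ⟨p₀, hp₀⟩ := hfeas
  obtain ⟨q₀, hq₀, -, hq₀nd⟩ := hp₀.exists_nodup_zip_tail_le hsymm hw hwsymm
  obtain ⟨p, ⟨hp, hpnd⟩, hmin⟩ := Set.exists_min_image
    {p | IsSolution Adj col s t p ∧ (p.zip p.tail).Nodup} (walkWeight w)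
    ((List.finite_setOf_nodup_zip_tail V).subset fun _ h ↦ h.2) ⟨q₀, hq₀, hq₀nd⟩
  refine ⟨p, hp, fun q hq ↦ ?_, hpnd⟩
  obtain ⟨q', hq', hq'w, hq'nd⟩ := hq.exists_nodup_zip_tail_le hsymm hw hwsymm
  exact (hmin q' ⟨hq', hq'nd⟩).trans hq'w
end

section
/- In the Minimum Spanning Eulerian Subgraph problem, if an edge of the input Eulerian multigraph has multiplicity at least 4, then reducing its multiplicity by 2 yields an equivalent instance: the resulting multigraph is still connected and Eulerian, and the optimal solution values coincide. In particular, there is always an optimal solution in which every edge has multiplicity at most 2. -/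
/-!
Removing a closed walk of length two, i.e. two parallel copies of an edge `e`, keeps every
degree even, and it keeps the multigraph connected as long as a third copy of `e` survives.
Hence any feasible solution using `e` at least three times can be shrunk by two copies of `e`
without increasing its weight (weights are nonnegative). With `e` of multiplicity at least 4 in
the instance, a solution either already fits into the reduced instance or uses `e` at least
three times, so both instances have the same feasible values up to domination, and the same
optimum. Shrinking an optimal solution repeatedly yields one with all multiplicities at most 2.
-/

/-- Degree of a vertex in a (loopless) multigraph given by a multiset of edges. -/
def mDeg {V : Type*} [DecidableEq V] (E : Multiset (Sym2 V)) (v : V) : ℕ :=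
  Multiset.countP (fun e => v ∈ e) E

/-- Connectivity of the multigraph given by edge multiset `E`. -/
def mConn {V : Type*} (E : Multiset (Sym2 V)) : Prop :=
  ∀ a b : V, Relation.ReflTransGen (fun x y => s(x, y) ∈ E) a b

/-- A feasible solution to Minimum Spanning Eulerian Subgraph on instance `E`:
a sub-multiset which is spanning, connected, and has all degrees even. -/
def mesSol {V : Type*} [DecidableEq V] (E E' : Multiset (Sym2 V)) : Prop :=
  E' ≤ E ∧ mConn E' ∧ ∀ v : V, Even (mDeg E' v)

/-- Total weight of a multigraph (with multiplicity), weights on the underlying simple edges. -/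
def mesWeight {V : Type*} (w : Sym2 V → ℝ) (E' : Multiset (Sym2 V)) : ℝ :=
  (E'.map w).sum

open Multiset

theorem Multiset.pair_eq_replicate_two {α : Type*} (a : α) :
    ({a, a} : Multiset α) = replicate 2 a := rfl

theorem Multiset.mem_sub_replicate {α : Type*} [DecidableEq α] {s : Multiset α} {a b : α} {n : ℕ}
    (hn : n < s.count b) (ha : a ∈ s) : a ∈ s - replicate n b := by
  rw [← count_pos] at ha ⊢
  rw [count_sub, count_replicate]
  split_ifs with h
  · subst h; omega
  · omega

theorem isLeast_iff_of_subset_of_exists_le {α : Type*} [PartialOrder α] {S T : Set α}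
    (hTS : T ⊆ S) (hST : ∀ x ∈ S, ∃ y ∈ T, y ≤ x) (m : α) : IsLeast S m ↔ IsLeast T m := by
  constructor
  · rintro ⟨hmS, hm⟩
    obtain ⟨y, hyT, hym⟩ := hST m hmS
    obtain rfl : y = m := le_antisymm hym (hm (hTS hyT))
    exact ⟨hyT, fun x hx => hm (hTS hx)⟩
  · rintro ⟨hmT, hm⟩
    refine ⟨hTS hmT, fun x hx => ?_⟩
    obtain ⟨y, hyT, hyx⟩ := hST x hx
    exact (hm hyT).trans hyx

section Eulerian

variable {V : Type*} {E F G : Multiset (Sym2 V)}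

theorem mConn.mono (hF : mConn F) (h : F ⊆ G) : mConn G := fun a b =>
  Relation.ReflTransGen.mono (fun _ _ hxy => h hxy) a b (hF a b)

theorem mesWeight_add (w : Sym2 V → ℝ) (F G : Multiset (Sym2 V)) :
    mesWeight w (F + G) = mesWeight w F + mesWeight w G := by
  simp only [mesWeight, map_add, sum_add]

theorem mesWeight_mono {w : Sym2 V → ℝ} (hw : ∀ e, 0 ≤ w e) (h : F ≤ G) :
    mesWeight w F ≤ mesWeight w G := by
  obtain ⟨H, rfl⟩ := exists_add_of_le h
  rw [mesWeight_add]
  exact le_add_of_nonneg_right (sum_nonneg fun x hx => by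
    obtain ⟨e, -, rfl⟩ := mem_map.mp hx
    exact hw e)

variable [DecidableEq V] {e : Sym2 V}

theorem mDeg_add (F G : Multiset (Sym2 V)) (v : V) : mDeg (F + G) v = mDeg F v + mDeg G v :=
  countP_add _ _ _

theorem even_mDeg_replicate {n : ℕ} (hn : Even n) (e : Sym2 V) (v : V) :
    Even (mDeg (replicate n e) v) := by
  by_cases hv : v ∈ e
  · rwa [mDeg, countP_eq_card.mpr (fun _ h => (eq_of_mem_replicate h).symm ▸ hv), card_replicate]
  · rw [mDeg, countP_eq_zero.mpr (fun _ h => (eq_of_mem_replicate h).symm ▸ hv)]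
    exact Even.zero

theorem even_mDeg_sub_replicate {n : ℕ} (hn : Even n) (h : n ≤ F.count e) {v : V}
    (hv : Even (mDeg F v)) : Even (mDeg (F - replicate n e) v) := by
  rw [← tsub_add_cancel_of_le (le_count_iff_replicate_le.mp h), mDeg_add] at hv
  exact (Nat.even_add.mp hv).mpr (even_mDeg_replicate hn e v)

theorem mesSol_self (hconn : mConn E) (heven : ∀ v, Even (mDeg E v)) : mesSol E E :=
  ⟨le_rfl, hconn, heven⟩

theorem mesSol.mono (hF : mesSol E F) (h : E ≤ G) : mesSol G F :=
  ⟨hF.1.trans h, hF.2⟩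

theorem mesSol.sub_replicate_two (hF : mesSol E F) (h : 2 < F.count e) :
    mesSol (E - replicate 2 e) (F - replicate 2 e) :=
  ⟨tsub_le_tsub_right hF.1 _, hF.2.1.mono fun _ => mem_sub_replicate h,
    fun v => even_mDeg_sub_replicate even_two h.le (hF.2.2 v)⟩

theorem mesSol.exists_sub_replicate_two {w : Sym2 V → ℝ} (hw : ∀ e, 0 ≤ w e)
    (hF : mesSol E F) (hE : 4 ≤ E.count e) :
    ∃ G, mesSol (E - replicate 2 e) G ∧ mesWeight w G ≤ mesWeight w F := by
  by_cases hFe : 2 < F.count e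
  · exact ⟨_, hF.sub_replicate_two hFe, mesWeight_mono hw tsub_le_self⟩
  -- `F` uses at most two of the at least four copies of `e`, so it avoids the two removed ones
  refine ⟨F, ⟨le_iff_count.mpr fun a => ?_, hF.2⟩, le_rfl⟩
  have hFa := le_iff_count.mp hF.1 a
  rw [count_sub, count_replicate]
  split_ifs with h
  · subst h; omega
  · omega

theorem mesSol.exists_count_le_two {w : Sym2 V → ℝ} (hw : ∀ e, 0 ≤ w e) (hF : mesSol E F) :
    ∃ G, mesSol E G ∧ mesWeight w G ≤ mesWeight w F ∧ ∀ e, G.count e ≤ 2 := by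
  induction hcard : card F using Nat.strong_induction_on generalizing F with
  | _ n ih =>
    by_cases hF2 : ∀ e, F.count e ≤ 2
    · exact ⟨F, hF, le_rfl, hF2⟩
    push Not at hF2
    obtain ⟨e, he⟩ := hF2
    have hle : replicate 2 e ≤ F := le_count_iff_replicate_le.mp he.le
    have hlt : card (F - replicate 2 e) < n := by
      rw [← hcard, card_sub hle, card_replicate]
      have := count_le_card e F
      omega
    obtain ⟨G, hG, hGF, hG2⟩ :=
      ih _ hlt ((hF.sub_replicate_two he).mono tsub_le_self) rfl
    exact ⟨G, hG, hGF.trans (mesWeight_mono hw tsub_le_self), hG2⟩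

theorem exists_optimal_mesSol (w : Sym2 V → ℝ) (hE : mesSol E F) :
    ∃ F, mesSol E F ∧ ∀ G, mesSol E G → mesWeight w F ≤ mesWeight w G :=
  Set.exists_min_image {F | mesSol E F} (mesWeight w)
    ((Set.finite_Iic E).subset fun _ hF => hF.1) ⟨F, hE⟩

end Eulerian

theorem stmt7_general {V : Type*} [DecidableEq V]
    (E : Multiset (Sym2 V)) (w : Sym2 V → ℝ) (hw : ∀ e, 0 ≤ w e)
    (hconn : mConn E) (heven : ∀ v : V, Even (mDeg E v))
    (e0 : Sym2 V) (he0 : 4 ≤ E.count e0) :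
    mConn (E - {e0, e0}) ∧
    (∀ v : V, Even (mDeg (E - {e0, e0}) v)) ∧
    (∀ m : ℝ,
      IsLeast {x | ∃ E', mesSol E E' ∧ mesWeight w E' = x} m ↔
      IsLeast {x | ∃ E', mesSol (E - {e0, e0}) E' ∧ mesWeight w E' = x} m) ∧
    (∃ E', mesSol E E' ∧
      (∀ E'', mesSol E E'' → mesWeight w E' ≤ mesWeight w E'') ∧
      ∀ e : Sym2 V, E'.count e ≤ 2) := by
  simp only [pair_eq_replicate_two]
  have hE := mesSol_self hconn heven
  obtain ⟨-, hconn', heven'⟩ := hE.sub_replicate_two (e := e0) (by omega)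
  refine ⟨hconn', heven', isLeast_iff_of_subset_of_exists_le ?_ ?_, ?_⟩
  · rintro _ ⟨F, hF, rfl⟩
    exact ⟨F, hF.mono tsub_le_self, rfl⟩
  · rintro _ ⟨F, hF, rfl⟩
    obtain ⟨G, hG, hGF⟩ := hF.exists_sub_replicate_two hw he0
    exact ⟨_, ⟨G, hG, rfl⟩, hGF⟩
  · obtain ⟨F, hF, hmin⟩ := exists_optimal_mesSol w hE
    obtain ⟨G, hG, hGF, hG2⟩ := hF.exists_count_le_two hw
    exact ⟨G, hG, fun H hH => hGF.trans (hmin H hH), hG2⟩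

/-- if an edge `e0` has multiplicity at least 4 in the input of Minimum Spanning
Eulerian Subgraph, then removing two copies of it yields an equivalent instance (still
connected and Eulerian, same optimal value); in particular there is always an optimal
solution in which every edge has multiplicity at most 2. -/
theorem stmt7 {V : Type*} [Fintype V] [DecidableEq V]
    (E : Multiset (Sym2 V)) (w : Sym2 V → ℝ) (hw : ∀ e, 0 ≤ w e)
    (hloop : ∀ e ∈ E, ¬ e.IsDiag)
    (hconn : mConn E) (heven : ∀ v : V, Even (mDeg E v))
    (e0 : Sym2 V) (he0 : 4 ≤ E.count e0) :
    mConn (E - {e0, e0}) ∧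
    (∀ v : V, Even (mDeg (E - {e0, e0}) v)) ∧
    (∀ m : ℝ,
      IsLeast {x | ∃ E', mesSol E E' ∧ mesWeight w E' = x} m ↔
      IsLeast {x | ∃ E', mesSol (E - {e0, e0}) E' ∧ mesWeight w E' = x} m) ∧
    (∃ E', mesSol E E' ∧
      (∀ E'', mesSol E E'' → mesWeight w E' ≤ mesWeight w E'') ∧
      ∀ e : Sym2 V, E'.count e ≤ 2) :=
  stmt7_general E w hw hconn heven e0 he0
end

section
/- In any feasible integer solution of the flow-based ILP for Graph Inspection, there is no circulation (closed directed flow) on the support of the x-variables that avoids the start vertex s. Precisely: if x assigns value 1 to every directed edge of a closed directed cycle C not containing s, and the charge variables satisfy y_{uv,u} + y_{uv,v} = 2(x_{u,v} + x_{v,u}) for all edges uv not incident to s, and for every vertex v ≠ s the total incoming charge sum over u in N(v)\{s} of y_{uv,v} is at most (2 - 2/(2n-3)) times the incoming flow sum over u in N(v) of x_{u,v}, then a contradiction arises; hence every unit of flow lies on a closed walk through s. -/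
/-!
Summing constraint (2a) over all ordered pairs of vertices of the cycle counts every charge twice,
so the charge consumed by the cycle's vertices is exactly twice its flow. Constraint (2b) caps
that consumption at `c` times the flow with `c = 2 - 2/(2n-3) < 2`, so the flow on the cycle must
vanish, contradicting the unit flow on its edges.
-/

open Finset

theorem sum_sum_charge_eq_two_mul_sum_sum_flow {V : Type*} (S : Finset V) (x : V → V → ℝ)
    (y : Sym2 V → V → ℝ)
    (h2a : ∀ u ∈ S, ∀ v ∈ S, y s(u, v) u + y s(u, v) v = 2 * (x u v + x v u)) :
    ∑ v ∈ S, ∑ u ∈ S, y s(u, v) v = 2 * ∑ v ∈ S, ∑ u ∈ S, x u v := by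
  have hswap : ∑ v ∈ S, ∑ u ∈ S, y s(u, v) u = ∑ v ∈ S, ∑ u ∈ S, y s(u, v) v := by
    rw [sum_comm]
    simp only [Sym2.eq_swap]
  have hsum := sum_congr rfl fun v hv => sum_congr rfl fun u hu => h2a u hu v hv
  simp only [sum_add_distrib, ← mul_sum, hswap] at hsum
  rw [sum_comm (f := fun v u => x v u)] at hsum
  linarith

theorem sum_sum_flow_nonpos_of_charge_le {V : Type*} [Fintype V] [DecidableEq V]
    (s : V) (S : Finset V) (hsS : s ∉ S)
    (x : V → V → ℝ) (y : Sym2 V → V → ℝ) (hy : ∀ e v, 0 ≤ y e v)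
    (hxS : ∀ u v, u ∉ S → x u v = 0) {c : ℝ} (hc : c < 2)
    (h2a : ∀ u ∈ S, ∀ v ∈ S, y s(u, v) u + y s(u, v) v = 2 * (x u v + x v u))
    (h2b : ∀ v ∈ S, ∑ u ∈ univ.erase s, y s(u, v) v ≤ c * ∑ u : V, x u v) :
    ∑ v ∈ S, ∑ u ∈ S, x u v ≤ 0 := by
  have hS : S ⊆ univ.erase s := fun u hu => mem_erase.2 ⟨ne_of_mem_of_not_mem hu hsS, mem_univ u⟩
  have hinflow : ∀ v, ∑ u : V, x u v = ∑ u ∈ S, x u v := fun v =>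
    (sum_subset (subset_univ S) fun u _ hu => hxS u v hu).symm
  have hcharge : 2 * ∑ v ∈ S, ∑ u ∈ S, x u v ≤ c * ∑ v ∈ S, ∑ u ∈ S, x u v :=
    calc 2 * ∑ v ∈ S, ∑ u ∈ S, x u v = ∑ v ∈ S, ∑ u ∈ S, y s(u, v) v :=
          (sum_sum_charge_eq_two_mul_sum_sum_flow S x y h2a).symm
      _ ≤ ∑ v ∈ S, ∑ u ∈ univ.erase s, y s(u, v) v :=
          sum_le_sum fun v _ => sum_le_sum_of_subset_of_nonneg hS fun u _ _ => hy _ _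
      _ ≤ ∑ v ∈ S, c * ∑ u ∈ S, x u v :=
          sum_le_sum fun v hv => (h2b v hv).trans_eq (by rw [hinflow])
      _ = c * ∑ v ∈ S, ∑ u ∈ S, x u v := (mul_sum ..).symm
  nlinarith

theorem stmt14_general {V : Type*} [Fintype V] [DecidableEq V]
    (s : V) (hn : 2 ≤ Fintype.card V)
    (x : V → V → ℝ) (y : Sym2 V → V → ℝ) (hy : ∀ e v, 0 ≤ y e v)
    (Cyc : List V) (hC3 : 3 ≤ Cyc.length)
    (hCs : s ∉ Cyc)
    (hx : ∀ u v : V, x u v = if (u, v) ∈ Cyc.zip Cyc.tail then 1 else 0)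
    (h2a : ∀ u v : V, u ≠ s → v ≠ s →
        y s(u, v) u + y s(u, v) v = 2 * (x u v + x v u))
    (h2b : ∀ v : V, v ≠ s →
        ∑ u ∈ Finset.univ.erase s, y s(u, v) v ≤
          (2 - 2 / (2 * (Fintype.card V : ℝ) - 3)) * ∑ u : V, x u v) :
    False := by
  obtain ⟨a, b, l, rfl⟩ : ∃ a b l, Cyc = a :: b :: l := by
    match Cyc, hC3 with
    | a :: b :: l, _ => exact ⟨a, b, l, rfl⟩
  set S := (a :: b :: l).toFinset
  have hne : ∀ v ∈ S, v ≠ s := fun v hv hvs => hCs (hvs ▸ List.mem_toFinset.1 hv)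
  have hxS : ∀ u v, u ∉ S → x u v = 0 := fun u v hu => by
    rw [hx, if_neg fun h => hu (List.mem_toFinset.2 (List.of_mem_zip h).1)]
  have hxnn : ∀ u v, 0 ≤ x u v := fun u v => by rw [hx]; split_ifs <;> norm_num
  have hc : 2 - 2 / (2 * (Fintype.card V : ℝ) - 3) < 2 := by
    have : (2 : ℝ) ≤ Fintype.card V := by exact_mod_cast hn
    have : 0 < 2 / (2 * (Fintype.card V : ℝ) - 3) := div_pos two_pos (by linarith)
    linarith
  have hflow := sum_sum_flow_nonpos_of_charge_le s S (mt List.mem_toFinset.1 hCs) x y hy hxS hc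
    (fun u hu v hv => h2a u v (hne u hu) (hne v hv)) fun v hv => h2b v (hne v hv)
  have haS : a ∈ S := by simp [S]
  have hbS : b ∈ S := by simp [S]
  have hab : x a b = 1 := by rw [hx, if_pos (by simp)]
  have : x a b ≤ ∑ v ∈ S, ∑ u ∈ S, x u v :=
    (single_le_sum (fun u _ => hxnn u b) haS).trans
      (single_le_sum (f := fun v => ∑ u ∈ S, x u v)
        (fun v _ => sum_nonneg fun u _ => hxnn u v) hbS)
  linarith

/-- in the flow-based ILP for Graph Inspection, no feasible assignment can put
one unit of flow on every directed edge of a closed directed cycle avoiding the start vertex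
`s`: the charge constraints (2a) and (2b) then yield a contradiction, hence every unit of
flow lies on a closed walk through `s`. -/
theorem stmt14 {V : Type*} [Fintype V] [DecidableEq V]
    (s : V) (hn : 2 ≤ Fintype.card V)
    (x : V → V → ℝ) (y : Sym2 V → V → ℝ) (hy : ∀ e v, 0 ≤ y e v)
    (Cyc : List V) (hC3 : 3 ≤ Cyc.length)
    (hCclosed : Cyc.head? = Cyc.getLast?)
    (hCnodup : Cyc.dropLast.Nodup)
    (hCs : s ∉ Cyc)
    (hx : ∀ u v : V, x u v = if (u, v) ∈ Cyc.zip Cyc.tail then 1 else 0)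
    (h2a : ∀ u v : V, u ≠ s → v ≠ s →
        y s(u, v) u + y s(u, v) v = 2 * (x u v + x v u))
    (h2b : ∀ v : V, v ≠ s →
        ∑ u ∈ Finset.univ.erase s, y s(u, v) v ≤
          (2 - 2 / (2 * (Fintype.card V : ℝ) - 3)) * ∑ u : V, x u v) :
    False :=
  stmt14_general s hn x y hy Cyc hC3 hCs hx h2a h2b
end
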